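/- Let C' be a monoidal category and C its Karoubi envelope, and let M be a C-bimodule category. Then the natural comparison functor from the horizontal trace of M over C' to the horizontal trace of M over C is an equivalence of categories (in fact an isomorphism on hom-spaces). -/
import Mathlib


open CategoryTheory MonoidalCategory Limits

universe v u v' u'

/-- A (not necessarily coherent) bimodule category structure on a category `M`
over a monoidal category `C`:  left and right actions together with the structural
isomorphisms expressing compatibility with the tensor product, the unit and the
commutation of the two actions ("middle associativity"). -/
structure BimodStr (C : Type u) [Category.{v} C] [MonoidalCategory C]
    (M : Type u') [Category.{v'} M] where
  L : C ⥤ M ⥤ M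
  R : C ⥤ M ⥤ M
  Lμ : ∀ (A B : C) (m : M), (L.obj (A ⊗ B)).obj m ≅ (L.obj A).obj ((L.obj B).obj m)
  Rμ : ∀ (A B : C) (m : M), (R.obj (A ⊗ B)).obj m ≅ (R.obj B).obj ((R.obj A).obj m)
  Lη : ∀ m : M, (L.obj (𝟙_ C)).obj m ≅ m
  Rη : ∀ m : M, (R.obj (𝟙_ C)).obj m ≅ m
  E : ∀ (A B : C) (m : M), (L.obj A).obj ((R.obj B).obj m) ≅ (R.obj B).obj ((L.obj A).obj m)

variable {C : Type u} [Category.{v} C] [MonoidalCategory C]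
variable {M : Type u'} [Category.{v'} M]

/-- A half-braiding on an object `m` of a `C`-bimodule category: a family of
isomorphisms `A ▷ m ≅ m ◁ A`, natural in `A` and compatible with tensor products. -/
structure HalfBraidingOn (B : BimodStr C M) (m : M) where
  β : ∀ A : C, (B.L.obj A).obj m ≅ (B.R.obj A).obj m
  natural : ∀ {A A' : C} (f : A ⟶ A'),
    (B.L.map f).app m ≫ (β A').hom = (β A).hom ≫ (B.R.map f).app m
  tensor : ∀ (A A' : C),
    (β (A ⊗ A')).hom =
      (B.Lμ A A' m).hom ≫ (B.L.obj A).map (β A').hom ≫ (B.E A A' m).hom ≫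
        (B.R.obj A').map (β A).hom ≫ (B.Rμ A A' m).inv

/-- An object of the center `Z_C(M)` of a bimodule category: an object of `M`
together with a half-braiding. -/
structure CenterObj (B : BimodStr C M) where
  pt : M
  hb : HalfBraidingOn B pt

namespace CenterObj

variable {B : BimodStr C M}

instance : Category (CenterObj B) where
  Hom x y := { f : x.pt ⟶ y.pt //
    ∀ A : C, (B.L.obj A).map f ≫ (y.hb.β A).hom = (x.hb.β A).hom ≫ (B.R.obj A).map f }
  id x := ⟨𝟙 x.pt, by intro A; simp⟩
  comp {x y z} f g := ⟨f.1 ≫ g.1, by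
    intro A
    rw [Functor.map_comp, Functor.map_comp, Category.assoc, g.2 A, ← Category.assoc,
      f.2 A, Category.assoc]⟩
  id_comp f := Subtype.ext (Category.id_comp f.1)
  comp_id f := Subtype.ext (Category.comp_id f.1)
  assoc f g h := Subtype.ext (Category.assoc f.1 g.1 h.1)

end CenterObj

/-- The forgetful functor from the center of a bimodule category to the underlying category. -/
def forgetCenter (B : BimodStr C M) : CenterObj B ⥤ M where
  obj z := z.pt
  map f := f.1

open DirectSum

variable [Preadditive M] [DecidableEq C]

/-- The space of "pre-trace" morphisms with label `X`:  `Hom(X ▷ m₁, m₂ ◁ X)`. -/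
abbrev htrPre (B : BimodStr C M) (m₁ m₂ : M) (X : C) :=
  (B.L.obj X).obj m₁ ⟶ (B.R.obj X).obj m₂

/-- The dinaturality relations defining the horizontal trace:  for
`ψ : Y ▷ m₁ ⟶ m₂ ◁ X` and `f : X ⟶ Y`, we identify `ψ ∘ (f ▷ id)` (in degree `X`)
with `(id ◁ f) ∘ ψ` (in degree `Y`). -/
def htrRel (B : BimodStr C M) (m₁ m₂ : M) :
    AddSubgroup (⨁ X : C, htrPre B m₁ m₂ X) :=
  AddSubgroup.closure
    { z | ∃ (X Y : C) (f : X ⟶ Y) (ψ : (B.L.obj Y).obj m₁ ⟶ (B.R.obj X).obj m₂),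
        z = DirectSum.of (htrPre B m₁ m₂) X ((B.L.map f).app m₁ ≫ ψ)
          - DirectSum.of (htrPre B m₁ m₂) Y (ψ ≫ (B.R.map f).app m₂) }

/-- Hom-spaces of the horizontal trace `htr_C(M)`:  the coend
`∫^X Hom(X ▷ m₁, m₂ ◁ X)` over all of `C`. -/
abbrev htrHom (B : BimodStr C M) (m₁ m₂ : M) :=
  (⨁ X : C, htrPre B m₁ m₂ X) ⧸ htrRel B m₁ m₂

/-- Dinaturality relations for the horizontal trace over the full (monoidal)
subcategory on the set of objects `S`. -/
def htrRelOn (B : BimodStr C M) (S : Set C) (m₁ m₂ : M) :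
    AddSubgroup (⨁ X : S, htrPre B m₁ m₂ X.1) :=
  AddSubgroup.closure
    { z | ∃ (X Y : S) (f : (X : C) ⟶ (Y : C))
          (ψ : (B.L.obj (Y : C)).obj m₁ ⟶ (B.R.obj (X : C)).obj m₂),
        z = DirectSum.of (fun X : S => htrPre B m₁ m₂ X.1) X ((B.L.map f).app m₁ ≫ ψ)
          - DirectSum.of (fun X : S => htrPre B m₁ m₂ X.1) Y (ψ ≫ (B.R.map f).app m₂) }

/-- Hom-spaces of the horizontal trace `htr_{C'}(M)` over the full subcategory `C'`
given by the set of objects `S`. -/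
abbrev htrHomOn (B : BimodStr C M) (S : Set C) (m₁ m₂ : M) :=
  (⨁ X : S, htrPre B m₁ m₂ X.1) ⧸ htrRelOn B S m₁ m₂

/-- The map on generators induced by the inclusion of the subcategory. -/
def inclDS (B : BimodStr C M) (S : Set C) (m₁ m₂ : M) :
    (⨁ X : S, htrPre B m₁ m₂ X.1) →+ ⨁ X : C, htrPre B m₁ m₂ X :=
  DirectSum.toAddMonoid fun X => DirectSum.of (htrPre B m₁ m₂) X.1

/-- Let `C'` be a monoidal category and `C` its Karoubi envelope
(formalized: `C'` is a full monoidal subcategory of the idempotent complete monoidal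
category `C`, given by a set of objects `S` closed under tensor product and containing
the unit, such that every object of `C` is a direct summand of an object of `C'`), and
let `M` be a `C`-bimodule category.  Then the natural comparison functor from the
horizontal trace of `M` over `C'` to the horizontal trace of `M` over `C` is an
equivalence of categories:  it is the identity on objects, and on every hom-space the
induced comparison map is an isomorphism. -/
theorem htr_karoubi_comparison_bijective
    [IsIdempotentComplete C]
    (B : BimodStr C M)
    (S : Set C)
    (hS : ∀ ⦃A A' : C⦄, A ∈ S → A' ∈ S → A ⊗ A' ∈ S)
    (hunit : 𝟙_ C ∈ S)
    (hdom : ∀ X : C, ∃ (Y : C) (_ : Y ∈ S) (ι : X ⟶ Y) (p : Y ⟶ X), ι ≫ p = 𝟙 X)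
    (m₁ m₂ : M) :
    ∃ e : htrHomOn B S m₁ m₂ ≃+ htrHom B m₁ m₂,
      ∀ x : ⨁ X : S, htrPre B m₁ m₂ X.1,
        e (QuotientAddGroup.mk x) = QuotientAddGroup.mk (inclDS B S m₁ m₂ x) := by
    classical
  choose Y hY ι p hp using hdom
  -- the basic dinaturality relation in `htrHom B m₁ m₂`
  have relC : ∀ {X X' : C} (f : X ⟶ X')
      (ψ : (B.L.obj X').obj m₁ ⟶ (B.R.obj X).obj m₂),
      (QuotientAddGroup.mk (DirectSum.of (htrPre B m₁ m₂) X ((B.L.map f).app m₁ ≫ ψ)) :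
        htrHom B m₁ m₂)
        = QuotientAddGroup.mk (DirectSum.of (htrPre B m₁ m₂) X' (ψ ≫ (B.R.map f).app m₂)) := by
    intro X X' f ψ
    rw [QuotientAddGroup.eq, neg_add_eq_sub, ← neg_sub]
    exact neg_mem (AddSubgroup.subset_closure ⟨X, X', f, ψ, rfl⟩)
  -- the basic dinaturality relation in `htrHomOn B S m₁ m₂`
  have relS : ∀ (X X' : S) (f : (X : C) ⟶ (X' : C))
      (ψ : (B.L.obj (X' : C)).obj m₁ ⟶ (B.R.obj (X : C)).obj m₂),
      (QuotientAddGroup.mk (DirectSum.of (fun X : S => htrPre B m₁ m₂ X.1) X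
          ((B.L.map f).app m₁ ≫ ψ)) : htrHomOn B S m₁ m₂)
        = QuotientAddGroup.mk (DirectSum.of (fun X : S => htrPre B m₁ m₂ X.1) X'
            (ψ ≫ (B.R.map f).app m₂)) := by
    intro X X' f ψ
    rw [QuotientAddGroup.eq, neg_add_eq_sub, ← neg_sub]
    exact neg_mem (AddSubgroup.subset_closure ⟨X, X', f, ψ, rfl⟩)
  -- the backwards map on each summand
  set toS : ∀ X : C, htrPre B m₁ m₂ X →+ htrHomOn B S m₁ m₂ := fun X =>
    ((QuotientAddGroup.mk' (htrRelOn B S m₁ m₂)).comp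
      (DirectSum.of (fun X : S => htrPre B m₁ m₂ X.1) ⟨Y X, hY X⟩)).comp
      (AddMonoidHom.mk' (fun g => (B.L.map (p X)).app m₁ ≫ g ≫ (B.R.map (ι X)).app m₂)
        (by intro a b
            simp [Preadditive.add_comp, Preadditive.comp_add])) with toS_def
  have toS_apply : ∀ (X : C) (g : htrPre B m₁ m₂ X),
      toS X g = QuotientAddGroup.mk (DirectSum.of (fun X : S => htrPre B m₁ m₂ X.1)
        ⟨Y X, hY X⟩ ((B.L.map (p X)).app m₁ ≫ g ≫ (B.R.map (ι X)).app m₂)) := fun _ _ => rfl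
  set Ψhom : (⨁ X : C, htrPre B m₁ m₂ X) →+ htrHomOn B S m₁ m₂ :=
    DirectSum.toAddMonoid toS with Ψhom_def
  have hkerΨ : htrRel B m₁ m₂ ≤ Ψhom.ker := by
    rw [htrRel, AddSubgroup.closure_le]
    rintro z ⟨X, X', f, ψ', rfl⟩
    simp only [SetLike.mem_coe, AddMonoidHom.mem_ker, map_sub, Ψhom_def,
      DirectSum.toAddMonoid_of, sub_eq_zero, toS_apply]
    have := relS ⟨Y X, hY X⟩ ⟨Y X', hY X'⟩ (p X ≫ f ≫ ι X')
      ((B.L.map (p X')).app m₁ ≫ ψ' ≫ (B.R.map (ι X)).app m₂)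
    have e1 : (B.L.map (p X ≫ f ≫ ι X')).app m₁ ≫
        ((B.L.map (p X')).app m₁ ≫ ψ' ≫ (B.R.map (ι X)).app m₂)
        = (B.L.map (p X)).app m₁ ≫ ((B.L.map f).app m₁ ≫ ψ') ≫ (B.R.map (ι X)).app m₂ := by
      have : (B.L.map (ι X')).app m₁ ≫ (B.L.map (p X')).app m₁ = 𝟙 _ := by
        rw [← NatTrans.comp_app, ← Functor.map_comp, hp, CategoryTheory.Functor.map_id, NatTrans.id_app]
      simp only [Functor.map_comp, NatTrans.comp_app, Category.assoc]
      rw [reassoc_of% this]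
    have e2 : ((B.L.map (p X')).app m₁ ≫ ψ' ≫ (B.R.map (ι X)).app m₂) ≫
        (B.R.map (p X ≫ f ≫ ι X')).app m₂
        = (B.L.map (p X')).app m₁ ≫ (ψ' ≫ (B.R.map f).app m₂) ≫ (B.R.map (ι X')).app m₂ := by
      have : (B.R.map (ι X)).app m₂ ≫ (B.R.map (p X)).app m₂ = 𝟙 _ := by
        rw [← NatTrans.comp_app, ← Functor.map_comp, hp, CategoryTheory.Functor.map_id, NatTrans.id_app]
      simp only [Functor.map_comp, NatTrans.comp_app, Category.assoc]
      rw [reassoc_of% this]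
    rw [e1, e2] at this
    exact this
  set Φhom : (⨁ X : S, htrPre B m₁ m₂ X.1) →+ htrHom B m₁ m₂ :=
    (QuotientAddGroup.mk' (htrRel B m₁ m₂)).comp (inclDS B S m₁ m₂) with Φhom_def
  have Φhom_apply : ∀ x, Φhom x = QuotientAddGroup.mk (inclDS B S m₁ m₂ x) := fun _ => rfl
  have hkerΦ : htrRelOn B S m₁ m₂ ≤ Φhom.ker := by
    rw [htrRelOn, AddSubgroup.closure_le]
    rintro z ⟨X, X', f, ψ', rfl⟩
    simp only [SetLike.mem_coe, AddMonoidHom.mem_ker, map_sub, Φhom_def,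
      AddMonoidHom.comp_apply, inclDS, DirectSum.toAddMonoid_of, sub_eq_zero]
    exact relC f ψ'
  set Φ : htrHomOn B S m₁ m₂ →+ htrHom B m₁ m₂ :=
    QuotientAddGroup.lift _ Φhom hkerΦ with Φ_def
  set Ψ : htrHom B m₁ m₂ →+ htrHomOn B S m₁ m₂ :=
    QuotientAddGroup.lift _ Ψhom hkerΨ with Ψ_def
  have hΨΦ : ∀ x, Ψ (Φ x) = x := by
    intro x
    induction x using QuotientAddGroup.induction_on with
    | H y =>
      show (Ψ.comp (Φ.comp (QuotientAddGroup.mk' (htrRelOn B S m₁ m₂)))) y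
        = QuotientAddGroup.mk' (htrRelOn B S m₁ m₂) y
      refine DFunLike.congr_fun (DirectSum.addHom_ext fun X g => ?_) y
      show Ψ (Φ (QuotientAddGroup.mk (DirectSum.of (fun X : S => htrPre B m₁ m₂ X.1) X g)))
        = QuotientAddGroup.mk (DirectSum.of (fun X : S => htrPre B m₁ m₂ X.1) X g)
      have h1 : Φ (QuotientAddGroup.mk (DirectSum.of (fun X : S => htrPre B m₁ m₂ X.1) X g))
          = QuotientAddGroup.mk (DirectSum.of (htrPre B m₁ m₂) X.1 g) := by
        simp [Φ_def, Φhom_def, inclDS]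
      rw [h1]
      have h2 : Ψ (QuotientAddGroup.mk (DirectSum.of (htrPre B m₁ m₂) X.1 g))
          = toS X.1 g := by
        simp [Ψ_def, Ψhom_def]
      rw [h2, toS_apply]
      have := relS X ⟨Y X.1, hY X.1⟩ (ι X.1) ((B.L.map (p X.1)).app m₁ ≫ g)
      have e1 : (B.L.map (ι X.1)).app m₁ ≫ ((B.L.map (p X.1)).app m₁ ≫ g) = g := by
        rw [← Category.assoc, ← NatTrans.comp_app, ← Functor.map_comp, hp,
          CategoryTheory.Functor.map_id, NatTrans.id_app, Category.id_comp]
      rw [e1, Category.assoc] at this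
      exact this.symm
  have hΦΨ : ∀ x, Φ (Ψ x) = x := by
    intro x
    induction x using QuotientAddGroup.induction_on with
    | H y =>
      show (Φ.comp (Ψ.comp (QuotientAddGroup.mk' (htrRel B m₁ m₂)))) y
        = QuotientAddGroup.mk' (htrRel B m₁ m₂) y
      refine DFunLike.congr_fun (DirectSum.addHom_ext fun X g => ?_) y
      show Φ (Ψ (QuotientAddGroup.mk (DirectSum.of (htrPre B m₁ m₂) X g)))
        = QuotientAddGroup.mk (DirectSum.of (htrPre B m₁ m₂) X g)
      have h2 : Ψ (QuotientAddGroup.mk (DirectSum.of (htrPre B m₁ m₂) X g)) = toS X g := by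
        simp [Ψ_def, Ψhom_def]
      rw [h2, toS_apply]
      have h1 : Φ (QuotientAddGroup.mk (DirectSum.of (fun X : S => htrPre B m₁ m₂ X.1)
          ⟨Y X, hY X⟩ ((B.L.map (p X)).app m₁ ≫ g ≫ (B.R.map (ι X)).app m₂)))
          = QuotientAddGroup.mk (DirectSum.of (htrPre B m₁ m₂) (Y X)
            ((B.L.map (p X)).app m₁ ≫ g ≫ (B.R.map (ι X)).app m₂)) := by
        simp [Φ_def, Φhom_def, inclDS]
      rw [h1]
      have := relC (ι X) ((B.L.map (p X)).app m₁ ≫ g)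
      have e1 : (B.L.map (ι X)).app m₁ ≫ ((B.L.map (p X)).app m₁ ≫ g) = g := by
        rw [← Category.assoc, ← NatTrans.comp_app, ← Functor.map_comp, hp,
          CategoryTheory.Functor.map_id, NatTrans.id_app, Category.id_comp]
      rw [e1, Category.assoc] at this
      exact this.symm
  exact ⟨⟨⟨Φ, Ψ, hΨΦ, hΦΨ⟩, Φ.map_add⟩, fun x => rfl⟩
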